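/- Let K be an O-category, Φ : ω → K a chain whose connecting morphisms are embeddings, and β : Φ ⇒ B a cocone in which every leg β_n is an embedding, with associated projections β_n^p. If α : Φ ⇒ A is any cocone in K, then the sequence (α_n ∘ β_n^p)_{n∈ℕ} is an ascending chain in the hom-dcpo K(B, A), and its directed supremum θ = ⊔_n α_n ∘ β_n^p satisfies θ ∘ β_n = α_n for every n, i.e. θ is a mediating morphism from β to α. -/

import Mathlib

open CategoryTheory OmegaCompletePartialOrder

universe v u

class OHom (K : Type u) [Category.{v} K] where
  homOrder : ∀ X Y : K, OmegaCompletePartialOrder (X ⟶ Y)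

attribute [instance] OHom.homOrder

/-- An O-category: a category enriched in dcpos with continuous composition. -/
class OCat (K : Type u) [Category.{v} K] extends OHom K where
  comp_mono : ∀ {X Y Z : K} {f f' : X ⟶ Y} {g g' : Y ⟶ Z},
    f ≤ f' → g ≤ g' → f ≫ g ≤ f' ≫ g'
  comp_cont_left : ∀ {X Y Z : K} (g : Y ⟶ Z) (c : Chain (X ⟶ Y))
    (hm : Monotone fun n => c n ≫ g),
    ωSup c ≫ g = ωSup ⟨fun n => c n ≫ g, hm⟩
  comp_cont_right : ∀ {X Y Z : K} (f : X ⟶ Y) (c : Chain (Y ⟶ Z))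
    (hm : Monotone fun n => f ≫ c n),
    f ≫ ωSup c = ωSup ⟨fun n => f ≫ c n, hm⟩

/-! The projections turn an arbitrary cocone `α` into an ascending chain because
`βp n ≫ e n = (βp n ≫ β n) ≫ βp (n + 1) ≤ βp (n + 1)`. Precomposing that chain with `β n`
makes it constantly `α n` from index `n` on, since `β n ≫ βp k` is the connecting map
`Φ n ⟶ Φ k` for `n ≤ k`; continuity of composition then gives `β n ≫ θ = α n`. -/

section

variable {K : Type u} [Category.{v} K] {Φ : ℕ → K} {e : ∀ n, Φ n ⟶ Φ (n + 1)}
  {B : K} {β : ∀ n, Φ n ⟶ B} {βp : ∀ n, B ⟶ Φ n} {A : K} {α : ∀ n, Φ n ⟶ A}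

theorem leg_comp_proj_comp_leg_of_le (hβcocone : ∀ n, e n ≫ β (n + 1) = β n)
    (hβ₁ : ∀ n, β n ≫ βp n = 𝟙 (Φ n)) (hαcocone : ∀ n, e n ≫ α (n + 1) = α n)
    {n k : ℕ} (hnk : n ≤ k) : β n ≫ βp k ≫ α k = α n := by
  obtain ⟨d, rfl⟩ := Nat.exists_eq_add_of_le hnk
  induction d generalizing n with
  | zero => rw [Nat.add_zero, ← Category.assoc, hβ₁, Category.id_comp]
  | succ d ih =>
    rw [Nat.add_succ, ← Nat.succ_add, ← hβcocone n, Category.assoc,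
      ih (Nat.le_add_right _ _), hαcocone]

theorem proj_comp_le_proj_succ [OCat K] (hβcocone : ∀ n, e n ≫ β (n + 1) = β n)
    (hβ₁ : ∀ n, β n ≫ βp n = 𝟙 (Φ n)) (hβ₂ : ∀ n, βp n ≫ β n ≤ 𝟙 B) (n : ℕ) :
    βp n ≫ e n ≤ βp (n + 1) :=
  calc βp n ≫ e n = (βp n ≫ β n) ≫ βp (n + 1) := by
        rw [Category.assoc, ← hβcocone n, Category.assoc, hβ₁, Category.comp_id]
    _ ≤ 𝟙 B ≫ βp (n + 1) := OCat.comp_mono (hβ₂ n) le_rfl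
    _ = βp (n + 1) := Category.id_comp _

theorem monotone_proj_comp_leg [OCat K] (hβcocone : ∀ n, e n ≫ β (n + 1) = β n)
    (hβ₁ : ∀ n, β n ≫ βp n = 𝟙 (Φ n)) (hβ₂ : ∀ n, βp n ≫ β n ≤ 𝟙 B)
    (hαcocone : ∀ n, e n ≫ α (n + 1) = α n) : Monotone fun n => βp n ≫ α n :=
  monotone_nat_of_le_succ fun n =>
    calc βp n ≫ α n = (βp n ≫ e n) ≫ α (n + 1) := by rw [Category.assoc, hαcocone]
      _ ≤ βp (n + 1) ≫ α (n + 1) :=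
        OCat.comp_mono (proj_comp_le_proj_succ hβcocone hβ₁ hβ₂ n) le_rfl

theorem leg_comp_ωSup_proj_comp_leg [OCat K] (hβcocone : ∀ n, e n ≫ β (n + 1) = β n)
    (hβ₁ : ∀ n, β n ≫ βp n = 𝟙 (Φ n)) (hαcocone : ∀ n, e n ≫ α (n + 1) = α n)
    (hm : Monotone fun n => βp n ≫ α n) (n : ℕ) :
    β n ≫ ωSup ⟨fun n => βp n ≫ α n, hm⟩ = α n := by
  have hleg : ∀ {k}, n ≤ k → β n ≫ βp k ≫ α k = α n :=
    leg_comp_proj_comp_leg_of_le hβcocone hβ₁ hαcocone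
  rw [OCat.comp_cont_right _ _ fun i j hij => OCat.comp_mono le_rfl (hm hij)]
  apply le_antisymm
  · refine ωSup_le _ _ fun k => ?_
    calc β n ≫ βp k ≫ α k ≤ β n ≫ βp (max n k) ≫ α (max n k) :=
          OCat.comp_mono le_rfl (hm (le_max_right n k))
      _ = α n := hleg (le_max_left n k)
  · refine le_trans (le_of_eq ?_) (le_ωSup _ n)
    exact (hleg le_rfl).symm

end

theorem mediating_morphism {K : Type u} [Category.{v} K] [OCat K]
    (Φ : ℕ → K) (e : ∀ n, Φ n ⟶ Φ (n + 1))
    (B : K) (β : ∀ n, Φ n ⟶ B) (βp : ∀ n, B ⟶ Φ n)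
    (hβcocone : ∀ n, e n ≫ β (n + 1) = β n)
    (hβ₁ : ∀ n, β n ≫ βp n = 𝟙 (Φ n)) (hβ₂ : ∀ n, βp n ≫ β n ≤ 𝟙 B)
    (A : K) (α : ∀ n, Φ n ⟶ A) (hαcocone : ∀ n, e n ≫ α (n + 1) = α n) :
    ∃ hm : Monotone fun n => βp n ≫ α n,
      ∀ n, β n ≫ ωSup ⟨fun n => βp n ≫ α n, hm⟩ = α n := by
  have hm := monotone_proj_comp_leg hβcocone hβ₁ hβ₂ hαcocone
  exact ⟨hm, leg_comp_ωSup_proj_comp_leg hβcocone hβ₁ hαcocone hm⟩
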